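/- Given real numbers ū_{i−1}, ū_i, v̄_{i−1}, v̄_i, there exists a unique real polynomial q₁ of degree at most 3 whose cell averages over I_{i−1} and I_i equal ū_{i−1} and ū_i and whose first-order moments over I_{i−1} and I_i equal v̄_{i−1} and v̄_i; moreover q₁(x_i + Δx/2) = (3/4)ū_{i−1} + (1/4)ū_i + (7/2)v̄_{i−1} + (23/2)v̄_i. -/

import Mathlib

open MeasureTheory Polynomial

/-- Cell average of a polynomial over the cell of width `Δx` centered at `xc`. -/
noncomputable def cellAvg (xc Δx : ℝ) (p : Polynomial ℝ) : ℝ :=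
  (1 / Δx) * ∫ x in (xc - Δx / 2)..(xc + Δx / 2), p.eval x

/-- First-order moment of a polynomial over the cell of width `Δx` centered at `xc`. -/
noncomputable def cellMoment (xc Δx : ℝ) (p : Polynomial ℝ) : ℝ :=
  (1 / Δx) * ∫ x in (xc - Δx / 2)..(xc + Δx / 2), p.eval x * ((x - xc) / Δx)

lemma integral_quartic (c0 c1 c2 c3 c4 a b : ℝ) :
    (∫ x in a..b, (c0 + c1*x + c2*x^2 + c3*x^3 + c4*x^4)) =
      (c0*b + c1/2*b^2 + c2/3*b^3 + c3/4*b^4 + c4/5*b^5)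
        - (c0*a + c1/2*a^2 + c2/3*a^3 + c3/4*a^4 + c4/5*a^5) := by
  have h : ∀ x ∈ Set.uIcc a b,
      HasDerivAt (fun y : ℝ => c0*y + c1/2*y^2 + c2/3*y^3 + c3/4*y^4 + c4/5*y^5)
        (c0 + c1*x + c2*x^2 + c3*x^3 + c4*x^4) x := by
    intro x _
    have h1 : HasDerivAt (fun y : ℝ => c0*y) (c0*1) x := (hasDerivAt_id x).const_mul c0
    have h2 := (hasDerivAt_pow 2 x).const_mul (c1/2)
    have h3 := (hasDerivAt_pow 3 x).const_mul (c2/3)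
    have h4 := (hasDerivAt_pow 4 x).const_mul (c3/4)
    have h5 := (hasDerivAt_pow 5 x).const_mul (c4/5)
    exact ((((h1.add h2).add h3).add h4).add h5).congr_deriv (by push_cast; ring)
  have hcont : Continuous fun x : ℝ => c0 + c1*x + c2*x^2 + c3*x^3 + c4*x^4 := by continuity
  exact intervalIntegral.integral_eq_sub_of_hasDerivAt h (hcont.intervalIntegrable a b)

lemma eval_cubic (p : Polynomial ℝ) (hp : p.degree ≤ 3) (x : ℝ) :
    p.eval x = p.coeff 0 + p.coeff 1 * x + p.coeff 2 * x^2 + p.coeff 3 * x^3 := by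
  have hn : p.natDegree < 4 :=
    lt_of_le_of_lt (Polynomial.natDegree_le_iff_degree_le.mpr hp) (by norm_num)
  rw [Polynomial.eval_eq_sum_range' hn]
  simp [Finset.sum_range_succ]

lemma avg_eq (p : Polynomial ℝ) (hp : p.degree ≤ 3) (xc Δx : ℝ) (h : Δx ≠ 0) :
    cellAvg xc Δx p = p.coeff 0 + p.coeff 1 * xc + p.coeff 2 * (xc^2 + Δx^2/12)
      + p.coeff 3 * (xc^3 + xc*Δx^2/4) := by
  have hcongr : (∫ x in (xc - Δx / 2)..(xc + Δx / 2), p.eval x)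
      = ∫ x in (xc - Δx / 2)..(xc + Δx / 2),
        (p.coeff 0 + p.coeff 1 * x + p.coeff 2 * x^2 + p.coeff 3 * x^3 + 0*x^4) := by
    apply intervalIntegral.integral_congr
    intro x _
    simp only [eval_cubic p hp]
    ring
  rw [cellAvg, hcongr, integral_quartic]
  field_simp
  ring

lemma mom_eq (p : Polynomial ℝ) (hp : p.degree ≤ 3) (xc Δx : ℝ) (h : Δx ≠ 0) :
    cellMoment xc Δx p = p.coeff 1 * (Δx/12) + p.coeff 2 * (xc*Δx/6)
      + p.coeff 3 * (xc^2*Δx/4 + Δx^3/80) := by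
  have hcongr : (∫ x in (xc - Δx / 2)..(xc + Δx / 2), p.eval x * ((x - xc) / Δx))
      = ∫ x in (xc - Δx / 2)..(xc + Δx / 2),
        ((-(p.coeff 0 * xc)/Δx) + ((p.coeff 0 - p.coeff 1 * xc)/Δx) * x
          + ((p.coeff 1 - p.coeff 2 * xc)/Δx) * x^2
          + ((p.coeff 2 - p.coeff 3 * xc)/Δx) * x^3 + (p.coeff 3/Δx)*x^4) := by
    apply intervalIntegral.integral_congr
    intro x _
    simp only [eval_cubic p hp]
    ring
  rw [cellMoment, hcongr, integral_quartic]
  field_simp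
  ring

noncomputable def qsol (xi Δx ubm ub vbm vb : ℝ) : Polynomial ℝ :=
  let m := xi - Δx/2
  let b0 := (ub + ubm)/2 - 2*(vb - vbm)
  let b1 := (9*(ub - ubm) - 30*(vb + vbm))/(4*Δx)
  let b2 := 6*(vb - vbm)/Δx^2
  let b3 := (30*(vb + vbm) - 5*(ub - ubm))/(2*Δx^3)
  C (b0 - b1*m + b2*m^2 - b3*m^3) + C (b1 - 2*b2*m + 3*b3*m^2) * X
    + C (b2 - 3*b3*m) * X^2 + C b3 * X^3

lemma qsol_degree (xi Δx ubm ub vbm vb : ℝ) : (qsol xi Δx ubm ub vbm vb).degree ≤ 3 := by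
  unfold qsol
  refine le_trans (Polynomial.degree_add_le _ _) (max_le (le_trans (Polynomial.degree_add_le _ _)
    (max_le (le_trans (Polynomial.degree_add_le _ _) (max_le ?_ ?_)) ?_)) ?_)
  · exact le_trans Polynomial.degree_C_le (by norm_num)
  · exact le_trans (Polynomial.degree_C_mul_X_le _) (by norm_num)
  · exact le_trans (Polynomial.degree_C_mul_X_pow_le 2 _) (by norm_num)
  · exact le_trans (Polynomial.degree_C_mul_X_pow_le 3 _) (by norm_num)

lemma qsol_coeff (xi Δx ubm ub vbm vb : ℝ) :
    (qsol xi Δx ubm ub vbm vb).coeff 0 =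
      ((ub + ubm)/2 - 2*(vb - vbm)) - ((9*(ub - ubm) - 30*(vb + vbm))/(4*Δx))*(xi - Δx/2)
        + (6*(vb - vbm)/Δx^2)*(xi - Δx/2)^2
        - ((30*(vb + vbm) - 5*(ub - ubm))/(2*Δx^3))*(xi - Δx/2)^3 ∧
    (qsol xi Δx ubm ub vbm vb).coeff 1 =
      (9*(ub - ubm) - 30*(vb + vbm))/(4*Δx) - 2*(6*(vb - vbm)/Δx^2)*(xi - Δx/2)
        + 3*((30*(vb + vbm) - 5*(ub - ubm))/(2*Δx^3))*(xi - Δx/2)^2 ∧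
    (qsol xi Δx ubm ub vbm vb).coeff 2 =
      6*(vb - vbm)/Δx^2 - 3*((30*(vb + vbm) - 5*(ub - ubm))/(2*Δx^3))*(xi - Δx/2) ∧
    (qsol xi Δx ubm ub vbm vb).coeff 3 = (30*(vb + vbm) - 5*(ub - ubm))/(2*Δx^3) := by
  refine ⟨?_, ?_, ?_, ?_⟩ <;>
  · simp only [qsol, Polynomial.coeff_add, Polynomial.coeff_C_mul, Polynomial.coeff_X_pow,
      Polynomial.coeff_X, Polynomial.coeff_C]
    norm_num

set_option maxHeartbeats 2000000 in
lemma qsol_spec (xi Δx : ℝ) (h : Δx ≠ 0) (ubm ub vbm vb : ℝ) :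
    cellAvg (xi - Δx) Δx (qsol xi Δx ubm ub vbm vb) = ubm ∧
    cellAvg xi Δx (qsol xi Δx ubm ub vbm vb) = ub ∧
    cellMoment (xi - Δx) Δx (qsol xi Δx ubm ub vbm vb) = vbm ∧
    cellMoment xi Δx (qsol xi Δx ubm ub vbm vb) = vb := by
  obtain ⟨h0, h1, h2, h3⟩ := qsol_coeff xi Δx ubm ub vbm vb
  refine ⟨?_, ?_, ?_, ?_⟩
  · rw [avg_eq _ (qsol_degree xi Δx ubm ub vbm vb) _ _ h, h0, h1, h2, h3]
    field_simp
    ring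
  · rw [avg_eq _ (qsol_degree xi Δx ubm ub vbm vb) _ _ h, h0, h1, h2, h3]
    field_simp
    ring
  · rw [mom_eq _ (qsol_degree xi Δx ubm ub vbm vb) _ _ h, h1, h2, h3]
    field_simp
    ring
  · rw [mom_eq _ (qsol_degree xi Δx ubm ub vbm vb) _ _ h, h1, h2, h3]
    field_simp
    ring

set_option maxHeartbeats 1000000 in
lemma qsol_eval (xi Δx : ℝ) (h : Δx ≠ 0) (ubm ub vbm vb : ℝ) :
    (qsol xi Δx ubm ub vbm vb).eval (xi + Δx / 2) =
      (3 / 4) * ubm + (1 / 4) * ub + (7 / 2) * vbm + (23 / 2) * vb := by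
  obtain ⟨h0, h1, h2, h3⟩ := qsol_coeff xi Δx ubm ub vbm vb
  rw [eval_cubic _ (qsol_degree xi Δx ubm ub vbm vb), h0, h1, h2, h3]
  field_simp
  ring

set_option maxHeartbeats 1000000 in
lemma qsol_uniq (xi Δx : ℝ) (h : Δx ≠ 0) (ubm ub vbm vb : ℝ) (y : Polynomial ℝ)
    (hd : y.degree ≤ 3)
    (h1 : cellAvg (xi - Δx) Δx y = ubm) (h2 : cellAvg xi Δx y = ub)
    (h3 : cellMoment (xi - Δx) Δx y = vbm) (h4 : cellMoment xi Δx y = vb) :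
    y = qsol xi Δx ubm ub vbm vb := by
  obtain ⟨g1, g2, g3, g4⟩ := qsol_spec xi Δx h ubm ub vbm vb
  rw [avg_eq _ (qsol_degree xi Δx ubm ub vbm vb) _ _ h] at g1 g2
  rw [mom_eq _ (qsol_degree xi Δx ubm ub vbm vb) _ _ h] at g3 g4
  rw [avg_eq y hd _ _ h] at h1 h2
  rw [mom_eq y hd _ _ h] at h3 h4
  have hne2 : (2 * Δx ^ 3 : ℝ) ≠ 0 := mul_ne_zero two_ne_zero (pow_ne_zero _ h)
  have hne4 : (4 * Δx ^ 3 : ℝ) ≠ 0 := mul_ne_zero four_ne_zero (pow_ne_zero _ h)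
  have e3 : y.coeff 3 = (qsol xi Δx ubm ub vbm vb).coeff 3 :=
    mul_left_cancel₀ hne2 (by
      linear_combination 5*(h1-g1) - 5*(h2-g2) + 30*(h3-g3) + 30*(h4-g4))
  have e2 : y.coeff 2 = (qsol xi Δx ubm ub vbm vb).coeff 2 :=
    mul_left_cancel₀ hne2 (by
      linear_combination (-15*(xi-Δx/2))*(h1-g1) + (15*(xi-Δx/2))*(h2-g2)
        + (-12*Δx-90*(xi-Δx/2))*(h3-g3) + (12*Δx-90*(xi-Δx/2))*(h4-g4))
  have e1 : y.coeff 1 = (qsol xi Δx ubm ub vbm vb).coeff 1 :=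
    mul_left_cancel₀ hne4 (by
      linear_combination (-(9*Δx^2-30*(xi-Δx/2)^2))*(h1-g1)
        + (9*Δx^2-30*(xi-Δx/2)^2)*(h2-g2)
        + (-30*Δx^2+180*(xi-Δx/2)^2+48*(xi-Δx/2)*Δx)*(h3-g3)
        + (-30*Δx^2+180*(xi-Δx/2)^2-48*(xi-Δx/2)*Δx)*(h4-g4))
  have e0 : y.coeff 0 = (qsol xi Δx ubm ub vbm vb).coeff 0 :=
    mul_left_cancel₀ hne4 (by
      linear_combination (2*Δx^3+9*(xi-Δx/2)*Δx^2-10*(xi-Δx/2)^3)*(h1-g1)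
        + (2*Δx^3-9*(xi-Δx/2)*Δx^2+10*(xi-Δx/2)^3)*(h2-g2)
        + (8*Δx^3+30*(xi-Δx/2)*Δx^2-24*(xi-Δx/2)^2*Δx-60*(xi-Δx/2)^3)*(h3-g3)
        + (-8*Δx^3+30*(xi-Δx/2)*Δx^2+24*(xi-Δx/2)^2*Δx-60*(xi-Δx/2)^3)*(h4-g4))
  apply Polynomial.ext
  intro n
  by_cases hn : n ≤ 3
  · interval_cases n
    · exact e0
    · exact e1
    · exact e2
    · exact e3
  · push_neg at hn
    have hcast : (3 : WithBot ℕ) < (n : WithBot ℕ) := by exact_mod_cast hn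
    rw [Polynomial.coeff_eq_zero_of_degree_lt (lt_of_le_of_lt hd hcast),
      Polynomial.coeff_eq_zero_of_degree_lt
        (lt_of_le_of_lt (qsol_degree xi Δx ubm ub vbm vb) hcast)]

theorem stmt8 (xi Δx : ℝ) (hΔx : 0 < Δx) (ubm ub vbm vb : ℝ) :
    (∃! q : Polynomial ℝ, q.degree ≤ 3 ∧
      cellAvg (xi - Δx) Δx q = ubm ∧ cellAvg xi Δx q = ub ∧
      cellMoment (xi - Δx) Δx q = vbm ∧ cellMoment xi Δx q = vb) ∧
    (∀ q : Polynomial ℝ, q.degree ≤ 3 →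
      cellAvg (xi - Δx) Δx q = ubm → cellAvg xi Δx q = ub →
      cellMoment (xi - Δx) Δx q = vbm → cellMoment xi Δx q = vb →
      q.eval (xi + Δx / 2) =
        (3 / 4) * ubm + (1 / 4) * ub + (7 / 2) * vbm + (23 / 2) * vb) := by
  have h : Δx ≠ 0 := ne_of_gt hΔx
  obtain ⟨g1, g2, g3, g4⟩ := qsol_spec xi Δx h ubm ub vbm vb
  constructor
  · refine ⟨qsol xi Δx ubm ub vbm vb,
      ⟨qsol_degree xi Δx ubm ub vbm vb, g1, g2, g3, g4⟩, ?_⟩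
    rintro y ⟨hd, h1, h2, h3, h4⟩
    exact qsol_uniq xi Δx h ubm ub vbm vb y hd h1 h2 h3 h4
  · intro q hd h1 h2 h3 h4
    rw [qsol_uniq xi Δx h ubm ub vbm vb q hd h1 h2 h3 h4]
    exact qsol_eval xi Δx h ubm ub vbm vb
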